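/- arXiv:2102.05836 — 2 statements merged into one kernel-verified Lean document; each statement's English description precedes it below -/
import Mathlib

section
/- If d_φ is a Bregman divergence and the association probabilities p(μ|x) are fixed, then the codevector location minimizing the weighted expected distortion ∫ p(x) p(μ|x) d_φ(x,μ) dx is μ* = E[X | μ] = (∫ x p(x) p(μ|x) dx) / p(μ), where p(μ) = ∫ p(x) p(μ|x) dx > 0. -/
/-!
Bregman divergences satisfy the three-point identity
`d(x, s) = d(x, m) + d(m, s) + ⟪∇φ m - ∇φ s, x - m⟫`. Weighting by `w` and integrating, the
last term vanishes for `m = μ*`, the `w`-weighted mean of `X`, so the expected distortion at `s`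
exceeds the one at `μ*` by `p(μ) · d(μ*, s)`, which is positive for `s ≠ μ*` by strict convexity
of `φ`.
-/

open scoped InnerProductSpace
open MeasureTheory

section FirstOrder

variable {E : Type*} [NormedAddCommGroup E] [NormedSpace ℝ E] {S : Set E} {f : E → ℝ}
  {f' : E →L[ℝ] ℝ} {x y : E}

theorem ConvexOn.le_sub_of_hasFDerivAt (hf : ConvexOn ℝ S f) (hfx : HasFDerivAt f f' x)
    (hx : x ∈ S) (hy : y ∈ S) : f' (y - x) ≤ f y - f x := by
  set L : ℝ →ᵃ[ℝ] E := AffineMap.lineMap x y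
  have hline : ConvexOn ℝ (L ⁻¹' S) (f ∘ L) := hf.comp_affineMap L
  have hderiv : HasDerivAt (f ∘ L) (f' (y - x)) 0 :=
    hfx.comp_hasDerivAt_of_eq (x := 0) AffineMap.hasDerivAt_lineMap
      (AffineMap.lineMap_apply_zero x y).symm
  simpa [L, slope_def_field] using
    hline.le_slope_of_hasDerivAt (by simpa [L] using hx) (by simpa [L] using hy) one_pos hderiv

/-- Apply the non-strict inequality at the midpoint of `[x, y]`. -/
theorem StrictConvexOn.lt_sub_of_hasFDerivAt (hf : StrictConvexOn ℝ S f)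
    (hfx : HasFDerivAt f f' x) (hx : x ∈ S) (hy : y ∈ S) (hxy : x ≠ y) :
    f' (y - x) < f y - f x := by
  have hhalf : (0 : ℝ) < 1 / 2 := by norm_num
  have hsum : (1 / 2 : ℝ) + 1 / 2 = 1 := by norm_num
  have hmid : f ((1 / 2 : ℝ) • x + (1 / 2 : ℝ) • y) < (1 / 2 : ℝ) • f x + (1 / 2 : ℝ) • f y :=
    hf.2 hx hy hxy hhalf hhalf hsum
  have htangent := hf.convexOn.le_sub_of_hasFDerivAt hfx hx
    (hf.1 hx hy hhalf.le hhalf.le hsum)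
  have hsub : (1 / 2 : ℝ) • x + (1 / 2 : ℝ) • y - x = (1 / 2 : ℝ) • (y - x) := by module
  rw [hsub, map_smul, smul_eq_mul] at htangent
  simp only [smul_eq_mul] at hmid
  linarith

end FirstOrder

section Bregman

variable {E : Type*} [NormedAddCommGroup E] [InnerProductSpace ℝ E] [CompleteSpace E]

noncomputable def bregmanDiv (φ : E → ℝ) (x s : E) : ℝ :=
  φ x - φ s - ⟪gradient φ s, x - s⟫_ℝ

theorem bregmanDiv_pos {S : Set E} {φ : E → ℝ} (hφ : StrictConvexOn ℝ S φ) {x s : E}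
    (hφs : DifferentiableAt ℝ φ s) (hx : x ∈ S) (hs : s ∈ S) (hxs : x ≠ s) :
    0 < bregmanDiv φ x s := by
  have := hφ.lt_sub_of_hasFDerivAt hφs.hasGradientAt.hasFDerivAt hs hx hxs.symm
  rw [InnerProductSpace.toDual_apply_apply] at this
  rw [bregmanDiv]
  linarith

theorem bregmanDiv_three_point (φ : E → ℝ) (x m s : E) :
    bregmanDiv φ x s =
      bregmanDiv φ x m + bregmanDiv φ m s + ⟪gradient φ m - gradient φ s, x - m⟫_ℝ := by
  simp only [bregmanDiv, inner_sub_left, inner_sub_right]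
  ring

theorem integral_mul_bregmanDiv {Ω : Type*} [MeasurableSpace Ω] {μ : Measure Ω}
    (φ : E → ℝ) {X : Ω → E} {w : Ω → ℝ} {m : E} (s : E) (hw : Integrable w μ)
    (hwX : Integrable (fun ω => w ω • X ω) μ)
    (hwm : Integrable (fun ω => w ω * bregmanDiv φ (X ω) m) μ)
    (hmean : ∫ ω, w ω • X ω ∂μ = (∫ ω, w ω ∂μ) • m) :
    ∫ ω, w ω * bregmanDiv φ (X ω) s ∂μ =
      ∫ ω, w ω * bregmanDiv φ (X ω) m ∂μ + (∫ ω, w ω ∂μ) * bregmanDiv φ m s := by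
  have hdev : Integrable (fun ω => w ω • X ω - w ω • m) μ := hwX.sub (hw.smul_const m)
  have hpointwise : ∀ ω, w ω * bregmanDiv φ (X ω) s =
      w ω * bregmanDiv φ (X ω) m + w ω * bregmanDiv φ m s +
        ⟪gradient φ m - gradient φ s, w ω • X ω - w ω • m⟫_ℝ := by
    intro ω
    rw [bregmanDiv_three_point φ (X ω) m s, ← smul_sub, real_inner_smul_right]
    ring
  have hconst : Integrable (fun ω => w ω * bregmanDiv φ m s) μ := hw.mul_const _
  have hsum : Integrable (fun ω => w ω * bregmanDiv φ (X ω) m + w ω * bregmanDiv φ m s) μ :=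
    hwm.add hconst
  have hcross : Integrable
      (fun ω => ⟪gradient φ m - gradient φ s, w ω • X ω - w ω • m⟫_ℝ) μ := hdev.const_inner _
  simp_rw [hpointwise]
  rw [integral_add hsum hcross, integral_add hwm hconst, integral_mul_const,
    integral_inner hdev, integral_sub hwX (hw.smul_const m), integral_smul_const, hmean,
    sub_self, inner_zero_right, add_zero]

end Bregman

theorem bregman_weighted_centroid_general {d : ℕ} {Ω : Type*} [MeasureSpace Ω]
    (S : Set (EuclideanSpace ℝ (Fin d)))
    (φ : EuclideanSpace ℝ (Fin d) → ℝ)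
    (hconv : StrictConvexOn ℝ S φ) (hdiff : Differentiable ℝ φ)
    (dφ : EuclideanSpace ℝ (Fin d) → EuclideanSpace ℝ (Fin d) → ℝ)
    (hdφ : ∀ x s, dφ x s = φ x - φ s - ⟪gradient φ s, x - s⟫_ℝ)
    (X : Ω → EuclideanSpace ℝ (Fin d))
    (w : Ω → ℝ)
    (hwint : Integrable w)
    (hwX : Integrable (fun ω => w ω • X ω))
    (hdint : ∀ s ∈ intrinsicInterior ℝ S, Integrable (fun ω => w ω * dφ (X ω) s))
    (hpμ : 0 < ∫ ω, w ω)
    (μstar : EuclideanSpace ℝ (Fin d))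
    (hμstar : μstar = (∫ ω, w ω)⁻¹ • ∫ ω, w ω • X ω)
    (hμstarS : μstar ∈ intrinsicInterior ℝ S) :
    ∀ s ∈ intrinsicInterior ℝ S, s ≠ μstar →
      (∫ ω, w ω * dφ (X ω) μstar) < ∫ ω, w ω * dφ (X ω) s := by
  intro s hs hsμ
  obtain rfl : dφ = bregmanDiv φ := funext₂ hdφ
  have hmean : ∫ ω, w ω • X ω = (∫ ω, w ω) • μstar := by
    rw [hμstar, smul_inv_smul₀ hpμ.ne']
  rw [integral_mul_bregmanDiv φ s hwint hwX (hdint μstar hμstarS) hmean]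
  exact lt_add_of_pos_right _ <| mul_pos hpμ <| bregmanDiv_pos hconv (hdiff s)
    (intrinsicInterior_subset hμstarS) (intrinsicInterior_subset hs) hsμ.symm

/-- With fixed association probabilities `w ω = p(μ | X ω)`, the codevector minimizing the
weighted expected Bregman distortion `E[w · d_φ(X, s)]` is
`μ* = E[X | μ] = E[w • X] / E[w]`. -/
theorem bregman_weighted_centroid {d : ℕ} {Ω : Type*} [MeasureSpace Ω]
    [IsProbabilityMeasure (volume : Measure Ω)]
    (S : Set (EuclideanSpace ℝ (Fin d))) (hS : Convex ℝ S)
    (φ : EuclideanSpace ℝ (Fin d) → ℝ)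
    (hconv : StrictConvexOn ℝ S φ) (hdiff : Differentiable ℝ φ)
    (dφ : EuclideanSpace ℝ (Fin d) → EuclideanSpace ℝ (Fin d) → ℝ)
    (hdφ : ∀ x s, dφ x s = φ x - φ s - ⟪gradient φ s, x - s⟫_ℝ)
    (X : Ω → EuclideanSpace ℝ (Fin d)) (hXS : ∀ ω, X ω ∈ S)
    (w : Ω → ℝ) (hw : ∀ ω, w ω ∈ Set.Icc (0 : ℝ) 1)
    (hwint : Integrable w)
    (hwX : Integrable (fun ω => w ω • X ω))
    (hwφ : Integrable (fun ω => w ω * φ (X ω)))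
    (hdint : ∀ s ∈ intrinsicInterior ℝ S, Integrable (fun ω => w ω * dφ (X ω) s))
    (hpμ : 0 < ∫ ω, w ω)
    (μstar : EuclideanSpace ℝ (Fin d))
    (hμstar : μstar = (∫ ω, w ω)⁻¹ • ∫ ω, w ω • X ω)
    (hμstarS : μstar ∈ intrinsicInterior ℝ S) :
    ∀ s ∈ intrinsicInterior ℝ S, s ≠ μstar →
      (∫ ω, w ω * dφ (X ω) μstar) < ∫ ω, w ω * dφ (X ω) s :=
  bregman_weighted_centroid_general S φ hconv hdiff dφ hdφ X w hwint hwX hdint hpμ μstar hμstar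
    hμstarS
end

section
/- For a random variable X with E[X] ∈ ri(S) and a Bregman divergence d_φ, the minimum over s of E[d_φ(X,s)] equals E[φ(X)] - φ(E[X]). -/
open scoped InnerProductSpace
open MeasureTheory

/-! Expanding `d_φ(X, s) = φ X - φ s - ⟪∇φ s, X - s⟫` and integrating, the gradient term is affine
in `X`, so `E[d_φ(X, s)] = (E[φ X] - φ (E X)) + d_φ(E X, s)`. The last term is nonnegative because a
convex function lies above its tangent planes, and vanishes at `s = E X`. -/

theorem ConvexOn.apply_sub_le_of_hasFDerivAt {E : Type*} [NormedAddCommGroup E] [NormedSpace ℝ E]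
    {S : Set E} {φ : E → ℝ} {φ' : E →L[ℝ] ℝ} {s y : E} (hφ : ConvexOn ℝ S φ)
    (hs : s ∈ S) (hy : y ∈ S) (hφ' : HasFDerivAt φ φ' s) :
    φ' (y - s) ≤ φ y - φ s := by
  have hline : ConvexOn ℝ (AffineMap.lineMap (k := ℝ) s y ⁻¹' S)
      (φ ∘ AffineMap.lineMap (k := ℝ) s y) :=
    hφ.comp_affineMap _
  have hderiv : HasDerivAt (φ ∘ AffineMap.lineMap (k := ℝ) s y) (φ' (y - s)) 0 := by
    refine HasFDerivAt.comp_hasDerivAt (0 : ℝ) ?_ AffineMap.hasDerivAt_lineMap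
    simpa using hφ'
  simpa [slope_def_field] using
    hline.le_slope_of_hasDerivAt (by simpa using hs) (by simpa using hy) zero_lt_one hderiv

section Bregman

variable {E : Type*} [NormedAddCommGroup E] [InnerProductSpace ℝ E] [CompleteSpace E]

@[simp]
theorem bregmanDiv_self (φ : E → ℝ) (x : E) : bregmanDiv φ x x = 0 := by
  simp [bregmanDiv]

theorem bregmanDiv_nonneg {S : Set E} {φ : E → ℝ} {x s : E} (hφ : ConvexOn ℝ S φ)
    (hx : x ∈ S) (hs : s ∈ S) (hφs : DifferentiableAt ℝ φ s) :
    0 ≤ bregmanDiv φ x s := by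
  have htangent := hφ.apply_sub_le_of_hasFDerivAt hs hx hφs.hasGradientAt.hasFDerivAt
  rw [InnerProductSpace.toDual_apply_apply] at htangent
  unfold bregmanDiv
  linarith

theorem integral_bregmanDiv {Ω : Type*} [MeasurableSpace Ω] {μ : Measure Ω}
    [IsProbabilityMeasure μ] {φ : E → ℝ} {X : Ω → E} (hX : Integrable X μ)
    (hφX : Integrable (fun ω => φ (X ω)) μ) (s : E) :
    ∫ ω, bregmanDiv φ (X ω) s ∂μ =
      (∫ ω, φ (X ω) ∂μ - φ (∫ ω, X ω ∂μ)) + bregmanDiv φ (∫ ω, X ω ∂μ) s := by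
  have hshift : Integrable (fun ω => φ (X ω) - φ s) μ := hφX.sub (integrable_const _)
  have hXs : Integrable (fun ω => X ω - s) μ := hX.sub (integrable_const s)
  calc ∫ ω, bregmanDiv φ (X ω) s ∂μ
      = ∫ ω, φ (X ω) ∂μ - φ s - ⟪gradient φ s, ∫ ω, X ω - s ∂μ⟫_ℝ := by
        simp only [bregmanDiv]
        rw [integral_sub hshift (hXs.const_inner _), integral_sub hφX (integrable_const _),
          integral_inner hXs]
        simp
    _ = _ := by
        rw [integral_sub hX (integrable_const s), integral_const]
        simp only [probReal_univ, one_smul, bregmanDiv]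
        ring

end Bregman

theorem bregman_min_value_general {d : ℕ} {Ω : Type*} [MeasureSpace Ω]
    [IsProbabilityMeasure (volume : Measure Ω)]
    (S : Set (EuclideanSpace ℝ (Fin d)))
    (φ : EuclideanSpace ℝ (Fin d) → ℝ)
    (hconv : StrictConvexOn ℝ S φ) (hdiff : Differentiable ℝ φ)
    (dφ : EuclideanSpace ℝ (Fin d) → EuclideanSpace ℝ (Fin d) → ℝ)
    (hdφ : ∀ x s, dφ x s = φ x - φ s - ⟪gradient φ s, x - s⟫_ℝ)
    (X : Ω → EuclideanSpace ℝ (Fin d))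
    (hXint : Integrable X) (hφXint : Integrable (fun ω => φ (X ω)))
    (hmean : (∫ ω, X ω) ∈ intrinsicInterior ℝ S) :
    IsLeast {v : ℝ | ∃ s ∈ intrinsicInterior ℝ S, v = ∫ ω, dφ (X ω) s}
      ((∫ ω, φ (X ω)) - φ (∫ ω, X ω)) := by
  obtain rfl : dφ = bregmanDiv φ := funext₂ hdφ
  refine ⟨⟨∫ ω, X ω, hmean, by simp [integral_bregmanDiv hXint hφXint]⟩, ?_⟩
  rintro _ ⟨s, hs, rfl⟩
  rw [integral_bregmanDiv hXint hφXint]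
  have hgap := bregmanDiv_nonneg hconv.convexOn (intrinsicInterior_subset hmean)
    (intrinsicInterior_subset hs) (hdiff s)
  linarith

/-- The minimum over `s` of the expected Bregman divergence `E[d_φ(X,s)]` equals
`E[φ(X)] - φ(E[X])`. -/
theorem bregman_min_value {d : ℕ} {Ω : Type*} [MeasureSpace Ω]
    [IsProbabilityMeasure (volume : Measure Ω)]
    (S : Set (EuclideanSpace ℝ (Fin d))) (hS : Convex ℝ S)
    (φ : EuclideanSpace ℝ (Fin d) → ℝ)
    (hconv : StrictConvexOn ℝ S φ) (hdiff : Differentiable ℝ φ)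
    (dφ : EuclideanSpace ℝ (Fin d) → EuclideanSpace ℝ (Fin d) → ℝ)
    (hdφ : ∀ x s, dφ x s = φ x - φ s - ⟪gradient φ s, x - s⟫_ℝ)
    (X : Ω → EuclideanSpace ℝ (Fin d)) (hXS : ∀ ω, X ω ∈ S)
    (hXint : Integrable X) (hφXint : Integrable (fun ω => φ (X ω)))
    (hdint : ∀ s ∈ intrinsicInterior ℝ S, Integrable (fun ω => dφ (X ω) s))
    (hmean : (∫ ω, X ω) ∈ intrinsicInterior ℝ S) :
    IsLeast {v : ℝ | ∃ s ∈ intrinsicInterior ℝ S, v = ∫ ω, dφ (X ω) s}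
      ((∫ ω, φ (X ω)) - φ (∫ ω, X ω)) :=
  bregman_min_value_general S φ hconv hdiff dφ hdφ X hXint hφXint hmean
end
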